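/- arXiv:2205.04789 — 2 statements merged into one kernel-verified Lean document; each statement's English description precedes it below -/
import Mathlib

section
/- Let E be a Banach space, T > 0 and 0 < α ≤ 1 < β. Let A : Δ₂ → E be a germ with ‖A‖_α < ∞ and ‖δA‖_β < ∞. Then there exists a function IA : [0,T] → E with (IA)_0 = 0 such that: (i) for every (s,t) ∈ Δ₂ and every sequence of partitions of [s,t] whose mesh tends to 0, the Riemann sums of A along these partitions converge to (IA)_t − (IA)_s; (ii) IA is α-Hölder continuous on [0,T]; and (iii) there is a constant c > 0 depending only on β such that ‖(IA)_t − (IA)_s − A_{s,t}‖_E ≤ c ‖δA‖_β |t−s|^β for all (s,t) ∈ Δ₂. -/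
open Filter

structure IntervalPartition (s t : ℝ) where
  n : ℕ
  pts : Fin (n + 1) → ℝ
  mono : Monotone pts
  first : pts 0 = s
  last : pts (Fin.last n) = t

noncomputable def IntervalPartition.mesh {s t : ℝ} (P : IntervalPartition s t) : ℝ :=
  ⨆ i : Fin P.n, (P.pts i.succ - P.pts i.castSucc)

/-- The Riemann sum of a germ `A : Δ₂ → E` along a partition `P` of `[s, t]`:
`∑_{[u,v] ∈ P} A_{u,v}`. -/
noncomputable def riemannSum {E : Type*} [NormedAddCommGroup E] {s t : ℝ}
    (A : ℝ → ℝ → E) (P : IntervalPartition s t) : E :=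
  ∑ i : Fin P.n, A (P.pts i.castSucc) (P.pts i.succ)

/-!
Young's maximal inequality: for every partition `P` of `[s, t]`,
`‖∑_P A - A s t‖ ≤ 2 ^ β ζ(β) ‖δA‖_β (t - s) ^ β`, obtained by removing one by one the point
whose two neighbours are closest. Applied on the blocks of a common refinement, it shows that the
Riemann sums along two partitions `P`, `Q` of `[s, t]` differ by at most
`c ‖δA‖_β (∑_P |Δ| ^ β + ∑_Q |Δ| ^ β)`, which tends to `0` with the mesh because `β > 1`.
Hence the Riemann sums along uniform partitions converge to some `I s t`, every sequence of
partitions with vanishing mesh has the same limit, `I` is additive, and the maximal inequality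
passes to the limit as the bound `‖I s t - A s t‖ ≤ c ‖δA‖_β (t - s) ^ β`; then `IA t = I 0 t`.
Clamping to `[0, T]` first extends the germ to all of `ℝ` without changing the bound on `δA`.
-/

open Finset Topology

lemma monotoneOn_Iic_of_le_succ {α : Type*} [Preorder α] {g : ℕ → α} {n : ℕ}
    (h : ∀ k < n, g k ≤ g (k + 1)) : MonotoneOn g (Set.Iic n) :=
  monotoneOn_of_le_succ Set.ordConnected_Iic fun k _ _ hk =>
    by simpa using h k (by simpa [Nat.succ_eq_succ] using hk)

section Partitions

def chainSum {M : Type*} [AddCommMonoid M] (f : ℝ → ℝ → M) (q : ℕ → ℝ) (n : ℕ) : M :=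
  ∑ k ∈ range n, f (q k) (q (k + 1))

noncomputable def energy (β : ℝ) (q : ℕ → ℝ) (n : ℕ) : ℝ :=
  chainSum (fun a b => (b - a) ^ β) q n

structure IsPartition (q : ℕ → ℝ) (n : ℕ) (s t : ℝ) : Prop where
  step_le : ∀ k < n, q k ≤ q (k + 1)
  zero_eq : q 0 = s
  last_eq : q n = t

variable {M : Type*} {f : ℝ → ℝ → M} {q : ℕ → ℝ} {n : ℕ} {s t : ℝ}

lemma chainSum_one [AddCommMonoid M] : chainSum f q 1 = f (q 0) (q 1) := by
  simp [chainSum]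

lemma chainSum_add [AddCommMonoid M] (m : ℕ) :
    chainSum f q (n + m) = chainSum f q n + chainSum f (fun k => q (n + k)) m := by
  simp only [chainSum, sum_range_add, add_assoc]

lemma chainSum_congr [AddCommMonoid M] {g : ℝ → ℝ → M} {r : ℕ → ℝ}
    (h : ∀ k < n, f (q k) (q (k + 1)) = g (r k) (r (k + 1))) : chainSum f q n = chainSum g r n :=
  sum_congr rfl fun k hk => h k (mem_range.1 hk)

lemma chainSum_eq_sum_blocks [AddCommMonoid M] {φ : ℕ → ℕ} (hφ : ∀ k < n, φ k ≤ φ (k + 1))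
    (hφ0 : φ 0 = 0) :
    chainSum f q (φ n) =
      ∑ k ∈ range n, chainSum f (fun j => q (φ k + j)) (φ (k + 1) - φ k) := by
  induction n with
  | zero => simp [hφ0, chainSum]
  | succ n ih =>
    rw [sum_range_succ, ← ih fun k hk => hφ k (by omega), ← chainSum_add,
      Nat.add_sub_cancel' (hφ n n.lt_succ_self)]

lemma energy_nonneg (hq : IsPartition q n s t) (β : ℝ) : 0 ≤ energy β q n :=
  sum_nonneg fun k hk => Real.rpow_nonneg (sub_nonneg.2 (hq.step_le k (mem_range.1 hk))) β

namespace IsPartition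

lemma monotoneOn (hq : IsPartition q n s t) : MonotoneOn q (Set.Iic n) :=
  monotoneOn_Iic_of_le_succ hq.step_le

lemma mem_Icc (hq : IsPartition q n s t) {k : ℕ} (hk : k ≤ n) : q k ∈ Set.Icc s t := by
  refine ⟨?_, ?_⟩
  · simpa [hq.zero_eq] using hq.monotoneOn (Set.mem_Iic.2 (Nat.zero_le n)) hk (Nat.zero_le k)
  · simpa [hq.last_eq] using hq.monotoneOn hk (Set.mem_Iic.2 le_rfl) hk

lemma le (hq : IsPartition q n s t) : s ≤ t :=
  (hq.mem_Icc le_rfl).1.trans (hq.mem_Icc le_rfl).2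

end IsPartition
end Partitions

section Constructions

variable {M : Type*} {f : ℝ → ℝ → M} {p q : ℕ → ℝ} {n m : ℕ} {s u t : ℝ}

lemma IsPartition.shift (hq : IsPartition q n s t) {a b : ℕ} (hab : a ≤ b) (hb : b ≤ n) :
    IsPartition (fun j => q (a + j)) (b - a) (q a) (q b) where
  step_le k hk := hq.step_le (a + k) (by omega)
  zero_eq := by simp
  last_eq := by rw [Nat.add_sub_cancel' hab]

lemma IsPartition.exists_two_step_le (hq : IsPartition q (m + 2) s t) :
    ∃ i ≤ m, q (i + 2) - q i ≤ 2 * (t - s) / (m + 1) := by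
  have htelescope :
      ∑ i ∈ range (m + 1), (q (i + 2) - q i) = q (m + 2) - q 1 + (q (m + 1) - q 0) := by
    rw [← sum_range_sub (fun k => q (k + 1)), ← sum_range_sub q, ← sum_add_distrib]
    exact sum_congr rfl fun i _ => by ring
  have hsum : ∑ i ∈ range (m + 1), (q (i + 2) - q i) ≤
      ∑ _i ∈ range (m + 1), 2 * (t - s) / (m + 1) := by
    have h1 := (hq.mem_Icc (k := 1) (by omega)).1
    have h2 := (hq.mem_Icc (k := m + 1) (by omega)).2
    rw [htelescope, sum_const, card_range, nsmul_eq_mul, hq.zero_eq, hq.last_eq]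
    push_cast
    rw [mul_div_cancel₀ _ (by positivity)]
    linarith
  obtain ⟨i, hi, h⟩ := exists_le_of_sum_le nonempty_range_add_one hsum
  exact ⟨i, Nat.lt_succ_iff.1 (mem_range.1 hi), h⟩

def eraseAt (q : ℕ → ℝ) (i : ℕ) : ℕ → ℝ := fun k => if k < i then q k else q (k + 1)

lemma IsPartition.eraseAt (hq : IsPartition q (n + 1) s t) {i : ℕ} (hi0 : 0 < i) (hi : i ≤ n) :
    IsPartition (eraseAt q i) n s t where
  step_le k hk := by
    unfold _root_.eraseAt
    split_ifs with h1 h2 h2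
    · exact hq.step_le k (by omega)
    · exact (hq.step_le k (by omega)).trans (hq.step_le (k + 1) (by omega))
    · omega
    · exact hq.step_le (k + 1) (by omega)
  zero_eq := by simp [_root_.eraseAt, hi0, hq.zero_eq]
  last_eq := by simp [_root_.eraseAt, hq.last_eq, hi]

lemma chainSum_eraseAt [AddCommGroup M] {i : ℕ} (hi : i ≤ m) :
    chainSum f q (m + 2) = chainSum f (eraseAt q (i + 1)) (m + 1) +
      (f (q i) (q (i + 1)) + f (q (i + 1)) (q (i + 2)) - f (q i) (q (i + 2))) := by
  obtain ⟨j, rfl⟩ := Nat.exists_eq_add_of_le hi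
  have hhead : chainSum f (eraseAt q (i + 1)) (i + 1) = chainSum f q i + f (q i) (q (i + 2)) := by
    rw [chainSum, sum_range_succ, chainSum]
    congr 1
    · exact sum_congr rfl fun k hk => by
        simp [eraseAt, (mem_range.1 hk).trans (Nat.lt_succ_self i), mem_range.1 hk]
    · simp [eraseAt]
  have htail : (fun k => eraseAt q (i + 1) (i + 1 + k)) = fun k => q (i + 2 + k) := by
    funext k
    simp only [eraseAt, if_neg (show ¬i + 1 + k < i + 1 by omega)]
    ring_nf
  rw [show i + j + 2 = i + 2 + j by ring, show i + j + 1 = i + 1 + j by ring,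
    chainSum_add (n := i + 2), chainSum_add (n := i + 1), hhead, htail]
  simp only [chainSum, sum_range_succ]
  abel

def concat (p : ℕ → ℝ) (n : ℕ) (q : ℕ → ℝ) : ℕ → ℝ := fun k => if k ≤ n then p k else q (k - n)

lemma concat_add (h : p n = q 0) (k : ℕ) : concat p n q (n + k) = q k := by
  unfold concat
  split_ifs with hk
  · obtain rfl : k = 0 := by omega
    simpa using h
  · simp

lemma chainSum_concat [AddCommMonoid M] (h : p n = q 0) :
    chainSum f (concat p n q) (n + m) = chainSum f p n + chainSum f q m := by
  rw [chainSum_add]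
  congr 1
  · exact chainSum_congr fun k hk => by simp [concat, hk.le, Nat.succ_le_of_lt hk]
  · simp only [concat_add h]

lemma IsPartition.concat (hp : IsPartition p n s u) (hq : IsPartition q m u t) :
    IsPartition (concat p n q) (n + m) s t where
  step_le k hk := by
    have hjoin : p n = q 0 := hp.last_eq.trans hq.zero_eq.symm
    rcases lt_or_ge k n with h | h
    · simpa [_root_.concat, h.le, Nat.succ_le_of_lt h] using hp.step_le k h
    · obtain ⟨j, rfl⟩ := Nat.exists_eq_add_of_le h
      rw [concat_add hjoin, add_assoc, concat_add hjoin]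
      exact hq.step_le j (by omega)
  zero_eq := by simp [_root_.concat, hp.zero_eq]
  last_eq := by rw [concat_add (hp.last_eq.trans hq.zero_eq.symm), hq.last_eq]

noncomputable def uniformPartition (s t : ℝ) (n k : ℕ) : ℝ := s + k * ((t - s) / n)

lemma uniformPartition_succ_sub (s t : ℝ) (n k : ℕ) :
    uniformPartition s t n (k + 1) - uniformPartition s t n k = (t - s) / n := by
  simp only [uniformPartition]
  push_cast
  ring

lemma isPartition_uniformPartition (hst : s ≤ t) (hn : n ≠ 0) :
    IsPartition (uniformPartition s t n) n s t where
  step_le k _ := by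
    have := uniformPartition_succ_sub s t n k
    have : 0 ≤ (t - s) / n := div_nonneg (sub_nonneg.2 hst) n.cast_nonneg
    linarith
  zero_eq := by simp [uniformPartition]
  last_eq := by
    simp only [uniformPartition]
    rw [mul_div_cancel₀ _ (Nat.cast_ne_zero.2 hn)]
    ring

end Constructions

section Refinement

variable {p q r : ℕ → ℝ} {n m N : ℕ} {s t : ℝ}

def Refines (r : ℕ → ℝ) (N : ℕ) (p : ℕ → ℝ) (n : ℕ) : Prop :=
  ∃ φ : ℕ → ℕ, (∀ k < n, φ k ≤ φ (k + 1)) ∧ φ 0 = 0 ∧ φ n = N ∧ ∀ k ≤ n, r (φ k) = p k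

lemma IsPartition.refines_of_strictMonoOn (hr : IsPartition r N s t)
    (hr' : StrictMonoOn r (Set.Iic N)) (hp : IsPartition p n s t)
    (hmem : ∀ k ≤ n, ∃ j ≤ N, r j = p k) : Refines r N p n := by
  choose! φ hφN hφ using hmem
  refine ⟨φ, fun k hk => ?_, ?_, ?_, hφ⟩
  · rw [← hr'.le_iff_le (hφN k hk.le) (hφN (k + 1) hk), hφ k hk.le, hφ (k + 1) hk]
    exact hp.step_le k hk
  · exact hr'.injOn (hφN 0 (Nat.zero_le n)) (Set.mem_Iic.2 (Nat.zero_le N))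
      (by rw [hφ 0 (Nat.zero_le n), hp.zero_eq, hr.zero_eq])
  · exact hr'.injOn (hφN n le_rfl) (Set.mem_Iic.2 le_rfl)
      (by rw [hφ n le_rfl, hp.last_eq, hr.last_eq])

lemma exists_isPartition_strictMonoOn (F : Finset ℝ) (hs : s ∈ F) (ht : t ∈ F)
    (hF : ∀ x ∈ F, x ∈ Set.Icc s t) :
    ∃ N r, IsPartition r N s t ∧ StrictMonoOn r (Set.Iic N) ∧ ∀ x ∈ F, ∃ j ≤ N, r j = x := by
  obtain ⟨N, hN⟩ := Nat.exists_eq_add_one_of_ne_zero (card_ne_zero_of_mem hs)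
  set e := F.orderEmbOfFin hN
  have hrange : ∀ x, x ∈ F ↔ ∃ i, e i = x := fun x => by
    rw [← Finset.mem_coe, ← F.range_orderEmbOfFin hN, Set.mem_range]
  have hclamp : ∀ j (hj : j ≤ N), Fin.clamp j N = ⟨j, Nat.lt_succ_of_le hj⟩ :=
    fun j hj => Fin.ext (min_eq_left hj)
  have hr' : StrictMonoOn (fun j => e (Fin.clamp j N)) (Set.Iic N) := fun i hi j hj hij => by
    simp only [hclamp i hi, hclamp j hj]
    exact e.strictMono hij
  have hmem : ∀ j, e (Fin.clamp j N) ∈ F := fun j => (hrange _).2 ⟨_, rfl⟩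
  refine ⟨N, fun j => e (Fin.clamp j N), ⟨fun k hk => (hr' (Set.mem_Iic.2 hk.le)
    (Set.mem_Iic.2 hk) k.lt_succ_self).le, ?_, ?_⟩, hr', fun x hx => ?_⟩
  · obtain ⟨i, hi⟩ := (hrange s).1 hs
    refine le_antisymm ?_ (hF _ (hmem 0)).1
    rw [← hi, hclamp 0 (Nat.zero_le N)]
    exact e.monotone (Fin.zero_le i)
  · obtain ⟨i, hi⟩ := (hrange t).1 ht
    refine le_antisymm (hF _ (hmem N)).2 ?_
    rw [← hi, hclamp N le_rfl]
    exact e.monotone (Fin.le_last i)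
  · obtain ⟨i, rfl⟩ := (hrange x).1 hx
    exact ⟨i, i.is_le, by simp only [hclamp i i.is_le]⟩

lemma IsPartition.exists_common_refinement (hp : IsPartition p n s t) (hq : IsPartition q m s t) :
    ∃ N r, IsPartition r N s t ∧ Refines r N p n ∧ Refines r N q m := by
  classical
  obtain ⟨N, r, hr, hr', hmem⟩ := exists_isPartition_strictMonoOn
    ((range (n + 1)).image p ∪ (range (m + 1)).image q)
    (mem_union_left _ (mem_image.2 ⟨0, by simp, hp.zero_eq⟩))
    (mem_union_left _ (mem_image.2 ⟨n, by simp, hp.last_eq⟩))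
    (by
      simp only [mem_union, mem_image, mem_range]
      rintro x (⟨k, hk, rfl⟩ | ⟨k, hk, rfl⟩)
      exacts [hp.mem_Icc (by omega), hq.mem_Icc (by omega)])
  refine ⟨N, r, hr, hr.refines_of_strictMonoOn hr' hp fun k hk => hmem _ ?_,
    hr.refines_of_strictMonoOn hr' hq fun k hk => hmem _ ?_⟩
  · exact mem_union_left _ (mem_image_of_mem _ (mem_range.2 (by omega)))
  · exact mem_union_right _ (mem_image_of_mem _ (mem_range.2 (by omega)))

end Refinement

lemma summable_natCast_rpow_neg {β : ℝ} (hβ : 1 < β) : Summable fun k : ℕ => (k : ℝ) ^ (-β) :=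
  Real.summable_nat_rpow.2 (by linarith)

noncomputable def sewingConst (β : ℝ) : ℝ := 2 ^ β * ∑' k : ℕ, (k : ℝ) ^ (-β)

lemma sewingConst_pos {β : ℝ} (hβ : 1 < β) : 0 < sewingConst β :=
  mul_pos (by positivity) <| (summable_natCast_rpow_neg hβ).tsum_pos
    (fun k => Real.rpow_nonneg k.cast_nonneg _) 1 (by simp)

section Germs

variable {E : Type*} [NormedAddCommGroup E] {A : ℝ → ℝ → E} {C β : ℝ}
  {p q r : ℕ → ℝ} {n m N : ℕ} {s t : ℝ}

def DeltaHolderWith (C β : ℝ) (A : ℝ → ℝ → E) : Prop :=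
  ∀ ⦃s u t : ℝ⦄, s ≤ u → u ≤ t → ‖A s t - A s u - A u t‖ ≤ C * (t - s) ^ β

namespace DeltaHolderWith

lemma apply_self (hA : DeltaHolderWith C β A) (hβ : 0 < β) (t : ℝ) : A t t = 0 := by
  simpa [Real.zero_rpow hβ.ne'] using hA (le_refl t) (le_refl t)

lemma nonneg (hA : DeltaHolderWith C β A) (hβ : 0 < β) : 0 ≤ C := by
  simpa [hA.apply_self hβ] using hA (s := 0) (u := 0) (t := 1) le_rfl zero_le_one

lemma norm_chainSum_sub_le_sum_rpow_neg (hA : DeltaHolderWith C β A) (hβ : 0 < β)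
    (hq : IsPartition q n s t) :
    ‖chainSum A q n - A s t‖ ≤ C * 2 ^ β * (∑ k ∈ range n, (k : ℝ) ^ (-β)) * (t - s) ^ β := by
  induction n using Nat.strong_induction_on generalizing q with
  | _ n ih =>
  match n, hq with
  | 0, hq =>
    rw [← hq.zero_eq, ← hq.last_eq]
    simp [chainSum, hA.apply_self hβ]
  | 1, hq => simp [chainSum_one, hq.zero_eq, hq.last_eq, Real.zero_rpow (neg_ne_zero.2 hβ.ne')]
  | m + 2, hq =>
    obtain ⟨i, hi, hgap⟩ := hq.exists_two_step_le
    have hrest := ih (m + 1) (by omega) (hq.eraseAt (i := i + 1) (by omega) (by omega))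
    have hδ := hA (hq.step_le i (by omega)) (hq.step_le (i + 1) (by omega))
    have hstep : 0 ≤ q (i + 2) - q i :=
      sub_nonneg.2 ((hq.step_le i (by omega)).trans (hq.step_le (i + 1) (by omega)))
    have hcost : C * (q (i + 2) - q i) ^ β ≤ C * 2 ^ β * ((m + 1 : ℕ) : ℝ) ^ (-β) * (t - s) ^ β :=
      calc C * (q (i + 2) - q i) ^ β ≤ C * (2 * (t - s) / (m + 1)) ^ β := by
            gcongr
            exact hA.nonneg hβ
        _ = _ := by
          have := hq.le
          rw [Real.div_rpow (by linarith) (by positivity), Real.mul_rpow zero_le_two (by linarith),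
            Real.rpow_neg (by positivity)]
          push_cast
          ring
    rw [chainSum_eraseAt hi, sum_range_succ]
    calc _ = ‖(chainSum A (eraseAt q (i + 1)) (m + 1) - A s t) -
          (A (q i) (q (i + 2)) - A (q i) (q (i + 1)) - A (q (i + 1)) (q (i + 2)))‖ := by
          congr 1
          abel
      _ ≤ _ := norm_sub_le _ _
      _ ≤ _ := add_le_add hrest (hδ.trans hcost)
      _ = _ := by ring

lemma norm_chainSum_sub_le (hA : DeltaHolderWith C β A) (hβ : 1 < β)
    (hq : IsPartition q n s t) : ‖chainSum A q n - A s t‖ ≤ sewingConst β * C * (t - s) ^ β := by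
  refine (hA.norm_chainSum_sub_le_sum_rpow_neg (by linarith) hq).trans ?_
  have := hq.le
  have := hA.nonneg (by linarith)
  calc C * 2 ^ β * (∑ k ∈ range n, (k : ℝ) ^ (-β)) * (t - s) ^ β
      ≤ C * 2 ^ β * (∑' k : ℕ, (k : ℝ) ^ (-β)) * (t - s) ^ β := by
        gcongr
        exact (summable_natCast_rpow_neg hβ).sum_le_tsum _ fun k _ => by positivity
    _ = _ := by rw [sewingConst]; ring

lemma norm_chainSum_sub_chainSum_le_of_refines (hA : DeltaHolderWith C β A) (hβ : 1 < β)
    (hr : IsPartition r N s t) (hrp : Refines r N p n) :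
    ‖chainSum A r N - chainSum A p n‖ ≤ sewingConst β * C * energy β p n := by
  obtain ⟨φ, hφ, hφ0, hφn, hrφ⟩ := hrp
  have hφN : ∀ k ≤ n, φ k ≤ N := fun k hk =>
    hφn ▸ monotoneOn_Iic_of_le_succ hφ (Set.mem_Iic.2 hk) (Set.mem_Iic.2 le_rfl) hk
  rw [← hφn, chainSum_eq_sum_blocks hφ hφ0, energy, chainSum, chainSum, mul_sum,
    ← sum_sub_distrib]
  refine (norm_sum_le _ _).trans (sum_le_sum fun k hk => ?_)
  have hk := mem_range.1 hk
  rw [← hrφ k hk.le, ← hrφ (k + 1) hk]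
  exact hA.norm_chainSum_sub_le hβ (hr.shift (hφ k hk) (hφN (k + 1) hk))

lemma norm_chainSum_sub_chainSum_le (hA : DeltaHolderWith C β A) (hβ : 1 < β)
    (hp : IsPartition p n s t) (hq : IsPartition q m s t) :
    ‖chainSum A p n - chainSum A q m‖ ≤ sewingConst β * C * (energy β p n + energy β q m) := by
  obtain ⟨N, r, hr, hrp, hrq⟩ := hp.exists_common_refinement hq
  calc ‖chainSum A p n - chainSum A q m‖
      = ‖(chainSum A r N - chainSum A q m) - (chainSum A r N - chainSum A p n)‖ := by
        congr 1
        abel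
    _ ≤ _ := norm_sub_le _ _
    _ ≤ _ := add_le_add (hA.norm_chainSum_sub_chainSum_le_of_refines hβ hr hrq)
        (hA.norm_chainSum_sub_chainSum_le_of_refines hβ hr hrp)
    _ = _ := by ring

end DeltaHolderWith
end Germs

section Energy

variable {q : ℕ → ℝ} {n : ℕ} {s t β : ℝ}

lemma IsPartition.energy_le (hq : IsPartition q n s t) (hβ : 1 ≤ β) {M : ℝ}
    (hM : ∀ k < n, q (k + 1) - q k ≤ M) : energy β q n ≤ M ^ (β - 1) * (t - s) := by
  calc energy β q n = ∑ k ∈ range n, (q (k + 1) - q k) ^ β := rfl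
    _ ≤ ∑ k ∈ range n, M ^ (β - 1) * (q (k + 1) - q k) :=
        sum_le_sum fun k hk => by
          have hk := mem_range.1 hk
          have hΔ : 0 ≤ q (k + 1) - q k := sub_nonneg.2 (hq.step_le k hk)
          rw [← sub_add_cancel β 1, Real.rpow_add_one' hΔ (by linarith), sub_add_cancel]
          exact mul_le_mul_of_nonneg_right (Real.rpow_le_rpow hΔ (hM k hk) (by linarith)) hΔ
    _ = M ^ (β - 1) * (t - s) := by rw [← mul_sum, sum_range_sub q, hq.zero_eq, hq.last_eq]

lemma tendsto_energy_of_tendsto_mesh {ι : Type*} {l : Filter ι} {P : ι → ℕ → ℝ} {N : ι → ℕ}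
    {M : ι → ℝ} (hP : ∀ i, IsPartition (P i) (N i) s t)
    (hM : ∀ i, ∀ k < N i, P i (k + 1) - P i k ≤ M i) (hM0 : Tendsto M l (𝓝 0)) (hβ : 1 < β) :
    Tendsto (fun i => energy β (P i) (N i)) l (𝓝 0) := by
  have hpow : Tendsto (fun i => M i ^ (β - 1) * (t - s)) l (𝓝 0) := by
    simpa [Real.zero_rpow (by linarith : β - 1 ≠ 0)] using
      ((Real.continuousAt_rpow_const 0 (β - 1) (Or.inr (by linarith))).tendsto.comp hM0).mul_const
        (t - s)
  exact squeeze_zero (fun i => energy_nonneg (hP i) β)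
    (fun i => (hP i).energy_le hβ.le (hM i)) hpow

lemma tendsto_energy_uniformPartition (hst : s ≤ t) (hβ : 1 < β) :
    Tendsto (fun n : ℕ => energy β (uniformPartition s t (n + 1)) (n + 1)) atTop (𝓝 0) :=
  tendsto_energy_of_tendsto_mesh (fun n => isPartition_uniformPartition hst n.succ_ne_zero)
    (fun n k _ => (uniformPartition_succ_sub s t (n + 1) k).le)
    ((tendsto_const_div_atTop_nhds_zero_nat (t - s)).comp (tendsto_add_atTop_nat 1)) hβ

end Energy

lemma cauchySeq_of_dist_le_add {X : Type*} [PseudoMetricSpace X] {f : ℕ → X} {b : ℕ → ℝ}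
    (h : ∀ n m, dist (f n) (f m) ≤ b n + b m) (hb : Tendsto b atTop (𝓝 0)) : CauchySeq f :=
  cauchySeq_iff_tendsto_dist_atTop_0.2 <| squeeze_zero (fun _ => dist_nonneg)
    (fun nm => h nm.1 nm.2)
    (by simpa [prod_atTop_atTop_eq] using (hb.comp tendsto_fst).add (hb.comp tendsto_snd))

noncomputable def sewing {E : Type*} [NormedAddCommGroup E] (A : ℝ → ℝ → E) (s t : ℝ) : E :=
  limUnder atTop fun n : ℕ => chainSum A (uniformPartition s t (n + 1)) (n + 1)

namespace DeltaHolderWith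

variable {E : Type*} [NormedAddCommGroup E] [CompleteSpace E] {A : ℝ → ℝ → E} {C β : ℝ}
  {p : ℕ → ℝ} {n : ℕ} {s u t : ℝ}

lemma tendsto_sewing (hA : DeltaHolderWith C β A) (hβ : 1 < β) (hst : s ≤ t) :
    Tendsto (fun n : ℕ => chainSum A (uniformPartition s t (n + 1)) (n + 1)) atTop
      (𝓝 (sewing A s t)) :=
  (cauchySeq_of_dist_le_add (fun n m => by
      rw [dist_eq_norm, ← mul_add]
      exact hA.norm_chainSum_sub_chainSum_le hβ (isPartition_uniformPartition hst n.succ_ne_zero)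
        (isPartition_uniformPartition hst m.succ_ne_zero))
    (by simpa using (tendsto_energy_uniformPartition hst hβ).const_mul (sewingConst β * C))
    ).tendsto_limUnder

lemma norm_chainSum_sub_sewing_le (hA : DeltaHolderWith C β A) (hβ : 1 < β)
    (hp : IsPartition p n s t) :
    ‖chainSum A p n - sewing A s t‖ ≤ sewingConst β * C * energy β p n := by
  have hbound := ((tendsto_energy_uniformPartition hp.le hβ).const_add (energy β p n)).const_mul
    (sewingConst β * C)
  rw [add_zero] at hbound
  exact le_of_tendsto_of_tendsto' ((hA.tendsto_sewing hβ hp.le).const_sub _).norm hbound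
    fun m => hA.norm_chainSum_sub_chainSum_le hβ hp
      (isPartition_uniformPartition hp.le m.succ_ne_zero)

lemma tendsto_chainSum_sewing (hA : DeltaHolderWith C β A) (hβ : 1 < β) {ι : Type*}
    {l : Filter ι} {P : ι → ℕ → ℝ} {N : ι → ℕ} (hP : ∀ i, IsPartition (P i) (N i) s t)
    (hE : Tendsto (fun i => energy β (P i) (N i)) l (𝓝 0)) :
    Tendsto (fun i => chainSum A (P i) (N i)) l (𝓝 (sewing A s t)) :=
  tendsto_iff_norm_sub_tendsto_zero.2 <| squeeze_zero (fun _ => norm_nonneg _)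
    (fun i => hA.norm_chainSum_sub_sewing_le hβ (hP i))
    (by simpa using hE.const_mul (sewingConst β * C))

lemma norm_sewing_sub_le (hA : DeltaHolderWith C β A) (hβ : 1 < β) (hst : s ≤ t) :
    ‖sewing A s t - A s t‖ ≤ sewingConst β * C * (t - s) ^ β := by
  have hunif := isPartition_uniformPartition hst one_ne_zero
  have := hA.norm_chainSum_sub_sewing_le hβ hunif
  rwa [energy, chainSum_one, chainSum_one, hunif.zero_eq, hunif.last_eq, norm_sub_rev] at this

lemma sewing_self (hA : DeltaHolderWith C β A) (hβ : 1 < β) (t : ℝ) : sewing A t t = 0 := by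
  simpa [hA.apply_self (by linarith), Real.zero_rpow (by linarith : β ≠ 0)] using
    hA.norm_sewing_sub_le hβ (le_refl t)

lemma sewing_add (hA : DeltaHolderWith C β A) (hβ : 1 < β) (hsu : s ≤ u) (hut : u ≤ t) :
    sewing A s t = sewing A s u + sewing A u t := by
  have hp := fun n : ℕ => isPartition_uniformPartition hsu n.succ_ne_zero
  have hq := fun n : ℕ => isPartition_uniformPartition hut n.succ_ne_zero
  have hjoin := fun n => (hp n).last_eq.trans (hq n).zero_eq.symm
  refine tendsto_nhds_unique (l := (atTop : Filter ℕ))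
    (hA.tendsto_chainSum_sewing hβ (fun n => (hp n).concat (hq n)) ?_) ?_
  · simp only [energy, chainSum_concat (hjoin _)]
    simpa [energy] using
      (tendsto_energy_uniformPartition hsu hβ).add (tendsto_energy_uniformPartition hut hβ)
  · simp only [chainSum_concat (hjoin _)]
    exact (hA.tendsto_sewing hβ hsu).add (hA.tendsto_sewing hβ hut)

end DeltaHolderWith

namespace IntervalPartition

variable {s t : ℝ} (P : IntervalPartition s t)

def seq : ℕ → ℝ := fun j => P.pts (Fin.clamp j P.n)

lemma seq_of_le {j : ℕ} (hj : j ≤ P.n) : P.seq j = P.pts ⟨j, Nat.lt_succ_of_le hj⟩ :=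
  congrArg P.pts (Fin.ext (min_eq_left hj))

lemma isPartition_seq : IsPartition P.seq P.n s t where
  step_le k hk := by
    rw [P.seq_of_le hk.le, P.seq_of_le hk]
    exact P.mono (Fin.mk_le_mk.2 k.le_succ)
  zero_eq := by rw [P.seq_of_le (Nat.zero_le _)]; exact P.first
  last_eq := by rw [P.seq_of_le le_rfl]; exact P.last

lemma seq_succ_sub_le_mesh {k : ℕ} (hk : k < P.n) : P.seq (k + 1) - P.seq k ≤ P.mesh := by
  rw [P.seq_of_le hk, P.seq_of_le hk.le]
  exact le_ciSup (f := fun i : Fin P.n => P.pts i.succ - P.pts i.castSucc)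
    (Set.finite_range _).bddAbove ⟨k, hk⟩

lemma riemannSum_eq_chainSum {E : Type*} [NormedAddCommGroup E] (A : ℝ → ℝ → E) :
    riemannSum A P = chainSum A P.seq P.n := by
  rw [riemannSum, chainSum, ← Fin.sum_univ_eq_sum_range (fun k => A (P.seq k) (P.seq (k + 1)))]
  exact sum_congr rfl fun i _ => by rw [P.seq_of_le i.is_lt.le, P.seq_of_le i.is_lt]; rfl

lemma pts_mem_Icc (i : Fin (P.n + 1)) : P.pts i ∈ Set.Icc s t :=
  ⟨P.first.symm.trans_le (P.mono (Fin.zero_le i)), (P.mono (Fin.le_last i)).trans_eq P.last⟩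

lemma riemannSum_congr {E : Type*} [NormedAddCommGroup E] {A B : ℝ → ℝ → E}
    (h : ∀ x ∈ Set.Icc s t, ∀ y ∈ Set.Icc s t, A x y = B x y) :
    riemannSum A P = riemannSum B P :=
  sum_congr rfl fun _ _ => h _ (P.pts_mem_Icc _) _ (P.pts_mem_Icc _)

end IntervalPartition

lemma DeltaHolderWith.tendsto_riemannSum {E : Type*} [NormedAddCommGroup E] [CompleteSpace E]
    {A : ℝ → ℝ → E} {C β s t : ℝ} (hA : DeltaHolderWith C β A) (hβ : 1 < β)
    {P : ℕ → IntervalPartition s t} (hP : Tendsto (fun k => (P k).mesh) atTop (𝓝 0)) :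
    Tendsto (fun k => riemannSum A (P k)) atTop (𝓝 (sewing A s t)) := by
  simp only [IntervalPartition.riemannSum_eq_chainSum]
  exact hA.tendsto_chainSum_sewing hβ (fun k => (P k).isPartition_seq)
    (tendsto_energy_of_tendsto_mesh (fun k => (P k).isPartition_seq)
      (fun k _ hj => (P k).seq_succ_sub_le_mesh hj) hP hβ)

lemma deltaHolderWith_projIcc {E : Type*} [NormedAddCommGroup E] {A : ℝ → ℝ → E} {C β T : ℝ}
    (hT : 0 ≤ T) (hC : 0 ≤ C) (hβ : 0 ≤ β)
    (hA : ∀ s u t : ℝ, 0 ≤ s → s ≤ u → u ≤ t → t ≤ T →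
      ‖A s t - A s u - A u t‖ ≤ C * (t - s) ^ β) :
    DeltaHolderWith C β fun s t => A (Set.projIcc 0 T hT s) (Set.projIcc 0 T hT t) := by
  intro s u t hsu hut
  have hmono := Set.monotone_projIcc hT
  refine (hA _ _ _ (Set.projIcc 0 T hT s).2.1 (hmono hsu) (hmono hut)
    (Set.projIcc 0 T hT t).2.2).trans ?_
  refine mul_le_mul_of_nonneg_left (Real.rpow_le_rpow (sub_nonneg.2 (hmono (hsu.trans hut)))
    ((le_abs_self _).trans ((Set.abs_projIcc_sub_projIcc hT).trans_eq ?_)) hβ) hC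
  exact abs_of_nonneg (sub_nonneg.2 (hsu.trans hut))

lemma rpow_le_rpow_sub_mul_rpow {x T α β : ℝ} (hx : 0 ≤ x) (hxT : x ≤ T) (hαβ : α ≤ β)
    (hβ : β ≠ 0) : x ^ β ≤ T ^ (β - α) * x ^ α := by
  calc x ^ β = x ^ (β - α) * x ^ α := by
        rw [← Real.rpow_add' hx (by simpa using hβ), sub_add_cancel]
    _ ≤ T ^ (β - α) * x ^ α := by gcongr

theorem sewing_lemma_general {E : Type*} [NormedAddCommGroup E] [CompleteSpace E]
    (T : ℝ) (hT : 0 < T) (α β : ℝ) (hα1 : α ≤ 1) (hβ : 1 < β) :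
    ∃ c : ℝ, 0 < c ∧
      ∀ A : ℝ → ℝ → E,
        (∀ t ∈ Set.Icc (0 : ℝ) T, A t t = 0) →
        ∀ Cα : ℝ, (∀ s t : ℝ, 0 ≤ s → s ≤ t → t ≤ T → ‖A s t‖ ≤ Cα * (t - s) ^ α) →
        ∀ Cβ : ℝ,
          (∀ s u t : ℝ, 0 ≤ s → s ≤ u → u ≤ t → t ≤ T →
            ‖A s t - A s u - A u t‖ ≤ Cβ * (t - s) ^ β) →
        ∃ IA : ℝ → E,
          IA 0 = 0 ∧
          (∀ s t : ℝ, 0 ≤ s → s ≤ t → t ≤ T →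
            ∀ P : ℕ → IntervalPartition s t,
              Tendsto (fun k => (P k).mesh) atTop (nhds 0) →
              Tendsto (fun k => riemannSum A (P k)) atTop (nhds (IA t - IA s))) ∧
          (∃ CH : ℝ, ∀ s t : ℝ, 0 ≤ s → s ≤ t → t ≤ T →
            ‖IA t - IA s‖ ≤ CH * (t - s) ^ α) ∧
          (∀ s t : ℝ, 0 ≤ s → s ≤ t → t ≤ T →
            ‖IA t - IA s - A s t‖ ≤ c * Cβ * (t - s) ^ β) := by
  refine ⟨sewingConst β, sewingConst_pos hβ, fun A _ Cα hCα Cβ hδ => ?_⟩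
  have hCβ : 0 ≤ Cβ := nonneg_of_mul_nonneg_left
    ((norm_nonneg _).trans (hδ 0 0 T le_rfl le_rfl hT.le le_rfl)) (by positivity)
  set B : ℝ → ℝ → E := fun s t => A (Set.projIcc 0 T hT.le s) (Set.projIcc 0 T hT.le t)
  have hB : DeltaHolderWith Cβ β B := deltaHolderWith_projIcc hT.le hCβ (by linarith) hδ
  have hBA : ∀ x ∈ Set.Icc 0 T, ∀ y ∈ Set.Icc 0 T, B x y = A x y := fun x hx y hy => by
    simp only [B, Set.projIcc_of_mem _ hx, Set.projIcc_of_mem _ hy]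
  have hIA : ∀ s t, 0 ≤ s → s ≤ t → sewing B 0 t - sewing B 0 s = sewing B s t :=
    fun s t hs hst => by rw [hB.sewing_add hβ hs hst]; abel
  refine ⟨sewing B 0, hB.sewing_self hβ 0, fun s t hs hst htT P hP => ?_,
    ⟨Cα + sewingConst β * Cβ * T ^ (β - α), fun s t hs hst htT => ?_⟩, fun s t hs hst htT => ?_⟩
  · have hsub : Set.Icc s t ⊆ Set.Icc 0 T := Set.Icc_subset_Icc hs htT
    simpa only [hIA s t hs hst, (P _).riemannSum_congr fun x hx y hy =>
      (hBA x (hsub hx) y (hsub hy)).symm] using hB.tendsto_riemannSum hβ hP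
  · have hBst := hBA s ⟨hs, hst.trans htT⟩ t ⟨hs.trans hst, htT⟩
    have hpow : (t - s) ^ β ≤ T ^ (β - α) * (t - s) ^ α :=
      rpow_le_rpow_sub_mul_rpow (by linarith) (by linarith) (by linarith) (by linarith)
    have hK : 0 ≤ sewingConst β * Cβ := mul_nonneg (sewingConst_pos hβ).le hCβ
    rw [hIA s t hs hst]
    calc ‖sewing B s t‖ ≤ ‖A s t‖ + ‖sewing B s t - A s t‖ := norm_le_insert' _ _
      _ ≤ Cα * (t - s) ^ α + sewingConst β * Cβ * (t - s) ^ β :=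
          add_le_add (hCα s t hs hst htT) (hBst ▸ hB.norm_sewing_sub_le hβ hst)
      _ ≤ _ := by linarith [mul_le_mul_of_nonneg_left hpow hK]
  · rw [hIA s t hs hst, ← hBA s ⟨hs, hst.trans htT⟩ t ⟨hs.trans hst, htT⟩]
    exact hB.norm_sewing_sub_le hβ hst

/-- **The Sewing Lemma.** Let `E` be a Banach space, `T > 0` and `0 < α ≤ 1 < β`.
There is a constant `c > 0` (depending only on `β`, and on the ambient fixed data) such
that for every germ `A : Δ₂ → E` with `‖A‖_α < ∞` (witnessed by `Cα`) and
`‖δA‖_β < ∞` (witnessed by `Cβ`), there exists `IA : [0,T] → E` with `IA 0 = 0` such that: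
(i) for every `(s,t) ∈ Δ₂`, the Riemann sums of `A` along any sequence of partitions of
`[s,t]` whose mesh tends to `0` converge to `IA t - IA s`;
(ii) `IA` is `α`-Hölder continuous on `[0,T]`;
(iii) `‖IA t - IA s - A s t‖ ≤ c * Cβ * (t-s)^β` on `Δ₂`. -/
theorem sewing_lemma {E : Type*} [NormedAddCommGroup E] [NormedSpace ℝ E] [CompleteSpace E]
    (T : ℝ) (hT : 0 < T) (α β : ℝ) (hα : 0 < α) (hα1 : α ≤ 1) (hβ : 1 < β) :
    ∃ c : ℝ, 0 < c ∧
      ∀ A : ℝ → ℝ → E,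
        (∀ t ∈ Set.Icc (0 : ℝ) T, A t t = 0) →
        ∀ Cα : ℝ, (∀ s t : ℝ, 0 ≤ s → s ≤ t → t ≤ T → ‖A s t‖ ≤ Cα * (t - s) ^ α) →
        ∀ Cβ : ℝ,
          (∀ s u t : ℝ, 0 ≤ s → s ≤ u → u ≤ t → t ≤ T →
            ‖A s t - A s u - A u t‖ ≤ Cβ * (t - s) ^ β) →
        ∃ IA : ℝ → E,
          IA 0 = 0 ∧
          (∀ s t : ℝ, 0 ≤ s → s ≤ t → t ≤ T →
            ∀ P : ℕ → IntervalPartition s t,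
              Tendsto (fun k => (P k).mesh) atTop (nhds 0) →
              Tendsto (fun k => riemannSum A (P k)) atTop (nhds (IA t - IA s))) ∧
          (∃ CH : ℝ, ∀ s t : ℝ, 0 ≤ s → s ≤ t → t ≤ T →
            ‖IA t - IA s‖ ≤ CH * (t - s) ^ α) ∧
          (∀ s t : ℝ, 0 ≤ s → s ≤ t → t ≤ T →
            ‖IA t - IA s - A s t‖ ≤ c * Cβ * (t - s) ^ β) :=
  sewing_lemma_general T hT α β hα1 hβ
end

section
/- Let (B_t)_{t∈[0,1]} be a standard one-dimensional Brownian motion. For every γ ∈ (0, 1/2) there exists a constant C > 0 (depending only on γ) such that for every integer k with γ < 1/2 − 1/k one has E[(sup_{s≠t ∈ [0,1]} |B_t − B_s| / |t−s|^γ)^k] ≤ 2 (2^{1+γ} C)^k (k−1)!!, where (k−1)!! denotes the double factorial. -/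
/-!
Chaining along dyadic grids. Let `Dₙ f = maxDyadicIncrement f n` be the largest increment of
`f` between consecutive points of `2⁻ⁿℤ ∩ [0,1]`. Following `s` and `t` down their dyadic floors
`⌊2ⁿ s⌋ / 2ⁿ` shows `|f t - f s| ≤ 2 ∑_{n ≥ m} Dₙ f` as soon as `t - s ≤ 2⁻ᵐ`; choosing `m` with
`2⁻ᵐ⁻¹ < t - s ≤ 2⁻ᵐ` gives `‖f‖_γ ≤ 2^{1+γ} ∑ₙ 2^{nγ} Dₙ f`. For Brownian motion `Dₙ` is a
maximum of `2ⁿ` centred Gaussians of variance `2⁻ⁿ`, whose absolute `k`-th moments are at most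
`2^{-nk/2} (k-1)!!`, so `‖2^{nγ} Dₙ‖_{L^k} ≤ 2^{n(γ + 1/k - 1/2)} ((k-1)!!)^{1/k}`. Minkowski's
inequality sums these `L^k` norms as a geometric series, and `γ + 1/k - 1/2 ≤ -δ` for one `δ > 0`
serving every admissible `k`.
-/

open MeasureTheory ProbabilityTheory
open scoped Nat ENNReal

structure IsStandardBrownianMotion {Ω : Type*} [MeasurableSpace Ω] (P : Measure Ω)
    (B : ℝ → Ω → ℝ) : Prop where
  isProb : IsProbabilityMeasure P
  meas : ∀ t : ℝ, Measurable (B t)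
  cont : ∀ ω, Continuous fun t => B t ω
  start : ∀ ω, B 0 ω = 0
  indep : ∀ (n : ℕ) (t : ℕ → ℝ), Monotone t → (∀ i, 0 ≤ t i) →
    iIndepFun
      (fun i : Fin n => fun ω => B (t (i + 1)) ω - B (t i) ω) P
  gauss : ∀ s t : ℝ, 0 ≤ s → s ≤ t →
    Measure.map (fun ω => B t ω - B s ω) P = gaussianReal 0 (t - s).toNNReal

noncomputable def holderSeminorm (γ : ℝ) (g : ℝ → ℝ) : ℝ≥0∞ :=
  ⨆ p : {p : ℝ × ℝ // p.1 ∈ Set.Icc (0 : ℝ) 1 ∧ p.2 ∈ Set.Icc (0 : ℝ) 1 ∧ p.1 ≠ p.2},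
    ENNReal.ofReal (|g (p : ℝ × ℝ).2 - g (p : ℝ × ℝ).1| / |(p : ℝ × ℝ).2 - (p : ℝ × ℝ).1| ^ γ)

open Filter Real Set Topology
open scoped NNReal

noncomputable def maxDyadicIncrement (f : ℝ → ℝ) (n : ℕ) : ℝ≥0∞ :=
  ⨆ j : Fin (2 ^ n), edist (f (((j : ℕ) + 1 : ℝ) / 2 ^ n)) (f ((j : ℕ) / 2 ^ n))

lemma two_rpow_mul_Gamma_le_doubleFactorial (k : ℕ) :
    (2 : ℝ) ^ ((k : ℝ) / 2) * Gamma ((k + 1) / 2) ≤ (k - 1)‼ * √π := by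
  induction k using Nat.twoStepInduction with
  | zero => simp [-one_div, Gamma_one_half_eq]
  | one =>
    norm_num [Gamma_one, ← sqrt_eq_rpow]
    exact sqrt_le_sqrt (by linarith [pi_gt_three])
  | more k ih _ =>
    have hΓ : Gamma ((↑(k + 2) + 1) / 2) = (k + 1) / 2 * Gamma ((k + 1) / 2) := by
      rw [← Gamma_add_one (by positivity)]
      congr 1
      push_cast
      ring
    have h2 : (2 : ℝ) ^ ((↑(k + 2) : ℝ) / 2) = 2 * 2 ^ ((k : ℝ) / 2) := by
      rw [show ((↑(k + 2) : ℝ) / 2) = 1 + k / 2 by push_cast; ring, rpow_add two_pos, rpow_one]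
    rw [hΓ, h2, show k + 2 - 1 = k + 1 by omega, Nat.doubleFactorial_add_one]
    push_cast
    nlinarith

lemma integral_abs_pow_gaussianReal (k : ℕ) :
    ∫ x, |x| ^ k ∂gaussianReal 0 1 = 2 ^ ((k : ℝ) / 2) * Gamma ((k + 1) / 2) / √π := by
  have hk : (-1 : ℝ) < k := by linarith [k.cast_nonneg (α := ℝ)]
  have hhalf : ∫ x in Ioi (0 : ℝ), x ^ k * rexp (-x ^ 2 / 2) =
      2 ^ (((k : ℝ) + 1) / 2) * (1 / 2) * Gamma ((k + 1) / 2) := by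
    have h := integral_rpow_mul_exp_neg_mul_rpow two_pos hk (one_half_pos (α := ℝ))
    rw [show (1 / 2 : ℝ) ^ (-((k : ℝ) + 1) / 2) = 2 ^ (((k : ℝ) + 1) / 2) by
      rw [one_div, inv_rpow zero_le_two, ← rpow_neg zero_le_two, neg_div, neg_neg]] at h
    rw [← h]
    refine setIntegral_congr_fun measurableSet_Ioi fun x _ => ?_
    rw [rpow_natCast, rpow_two]
    ring_nf
  calc ∫ x, |x| ^ k ∂gaussianReal 0 1
      = (√(2 * π))⁻¹ * ∫ x, |x| ^ k * rexp (-|x| ^ 2 / 2) := by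
        rw [integral_gaussianReal_eq_integral_smul one_ne_zero, gaussianPDFReal_def,
          ← integral_const_mul]
        congr 1 with x
        simp only [smul_eq_mul, NNReal.coe_one, mul_one, sub_zero, sq_abs]
        ring
    _ = 2 ^ ((k : ℝ) / 2) * Gamma ((k + 1) / 2) / √π := by
        rw [integral_comp_abs (f := fun x => x ^ k * rexp (-x ^ 2 / 2)), hhalf,
          sqrt_mul zero_le_two, show ((k : ℝ) + 1) / 2 = 1 / 2 + k / 2 by ring,
          rpow_add two_pos, ← sqrt_eq_rpow]
        field_simp

lemma lintegral_enorm_pow_gaussianReal_le (v : ℝ≥0) (k : ℕ) :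
    ∫⁻ x, ‖x‖ₑ ^ k ∂gaussianReal 0 v ≤ (v : ℝ≥0∞) ^ ((k : ℝ) / 2) * (k - 1)‼ := by
  have hstd : ∫⁻ x, ‖x‖ₑ ^ k ∂gaussianReal 0 1 ≤ (k - 1)‼ := by
    have hint : Integrable (fun x : ℝ => |x| ^ k) (gaussianReal 0 1) := by
      rcases eq_or_ne k 0 with rfl | hk
      · simp
      · simpa using (memLp_id_gaussianReal (μ := 0) (v := 1) k).integrable_norm_pow hk
    simp_rw [enorm_eq_ofReal_abs, ← ENNReal.ofReal_pow (abs_nonneg _)]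
    rw [← ofReal_integral_eq_lintegral_ofReal hint (ae_of_all _ fun x => by positivity),
      integral_abs_pow_gaussianReal, ← ENNReal.ofReal_natCast]
    refine ENNReal.ofReal_le_ofReal ((div_le_iff₀ (by positivity)).2 ?_)
    exact two_rpow_mul_Gamma_le_doubleFactorial k
  have hmap : (gaussianReal 0 1).map (fun x => √v * x) = gaussianReal 0 v := by
    rw [gaussianReal_map_const_mul]
    congr 1
    · simp
    · ext; simp
  rw [← hmap, lintegral_map (by fun_prop) (by fun_prop)]
  simp_rw [enorm_mul, mul_pow]
  rw [lintegral_const_mul _ (by fun_prop)]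
  refine mul_le_mul' (le_of_eq ?_) hstd
  rw [← ENNReal.rpow_natCast, Real.enorm_eq_ofReal (sqrt_nonneg _), sqrt_eq_rpow,
    ← ENNReal.ofReal_rpow_of_nonneg v.coe_nonneg (by norm_num : (0 : ℝ) ≤ 1 / 2),
    ENNReal.ofReal_coe_nnreal, ← ENNReal.rpow_mul]
  ring_nf

theorem ENNReal.iSup_rpow {ι : Sort*} (x : ι → ℝ≥0∞) {p : ℝ} (hp : 0 < p) :
    (⨆ i, x i) ^ p = ⨆ i, x i ^ p :=
  (orderIsoRpow p hp).map_iSup x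

theorem lintegral_tsum_rpow_le {α : Type*} [MeasurableSpace α] {μ : Measure α}
    {f : ℕ → α → ℝ≥0∞} (hf : ∀ n, AEMeasurable (f n) μ) {p : ℝ} (hp : 1 ≤ p) :
    (∫⁻ a, (∑' n, f n a) ^ p ∂μ) ^ (1 / p) ≤ ∑' n, (∫⁻ a, f n a ^ p ∂μ) ^ (1 / p) := by
  have hp0 : 0 < p := zero_lt_one.trans_le hp
  have hsum : ∀ N, (∫⁻ a, (∑ n ∈ Finset.range N, f n a) ^ p ∂μ) ^ (1 / p) ≤
      ∑ n ∈ Finset.range N, (∫⁻ a, f n a ^ p ∂μ) ^ (1 / p) := by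
    intro N
    induction N with
    | zero => simp [ENNReal.zero_rpow_of_pos hp0, hp0]
    | succ N ih =>
      simp_rw [Finset.sum_range_succ]
      exact (ENNReal.lintegral_Lp_add_le (Finset.aemeasurable_fun_sum _ fun n _ => hf n) (hf N)
        hp).trans (add_le_add ih le_rfl)
  have hmono : ∀ a, Monotone fun N => (∑ n ∈ Finset.range N, f n a) ^ p := fun a _ _ h =>
    ENNReal.rpow_le_rpow (Finset.sum_le_sum_of_subset (Finset.range_mono h)) hp0.le
  calc (∫⁻ a, (∑' n, f n a) ^ p ∂μ) ^ (1 / p)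
      = ⨆ N, (∫⁻ a, (∑ n ∈ Finset.range N, f n a) ^ p ∂μ) ^ (1 / p) := by
        simp_rw [ENNReal.tsum_eq_iSup_nat, ENNReal.iSup_rpow _ hp0]
        rw [lintegral_iSup' (fun N => (Finset.aemeasurable_fun_sum _ fun n _ => hf n).pow_const p)
          (ae_of_all _ hmono), ENNReal.iSup_rpow _ (one_div_pos.2 hp0)]
    _ ≤ ∑' n, (∫⁻ a, f n a ^ p ∂μ) ^ (1 / p) :=
        iSup_le fun N => (hsum N).trans (ENNReal.sum_le_tsum _)

theorem lintegral_tsum_pow_le_of_le {α : Type*} [MeasurableSpace α] {μ : Measure α}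
    {f : ℕ → α → ℝ≥0∞} (hf : ∀ n, AEMeasurable (f n) μ) {k : ℕ} {a : ℕ → ℝ≥0∞} {K : ℝ≥0∞}
    (h : ∀ n, ∫⁻ x, f n x ^ k ∂μ ≤ a n ^ k * K) :
    ∫⁻ x, (∑' n, f n x) ^ k ∂μ ≤ (∑' n, a n) ^ k * K := by
  rcases Nat.eq_zero_or_pos k with rfl | hk
  · simpa using h 0
  have hk' : (0 : ℝ) < k := by exact_mod_cast hk
  have hroot : ∀ n, (∫⁻ x, f n x ^ k ∂μ) ^ (1 / (k : ℝ)) ≤ a n * K ^ (1 / (k : ℝ)) := fun n => by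
    refine (ENNReal.rpow_le_rpow (h n) (by positivity)).trans_eq ?_
    rw [ENNReal.mul_rpow_of_nonneg _ _ (by positivity), ← ENNReal.rpow_natCast,
      ← ENNReal.rpow_mul, mul_one_div_cancel hk'.ne', ENNReal.rpow_one]
  have hmink := lintegral_tsum_rpow_le hf (p := k) (by exact_mod_cast hk)
  simp_rw [ENNReal.rpow_natCast] at hmink
  have := hmink.trans ((ENNReal.tsum_le_tsum hroot).trans_eq ENNReal.tsum_mul_right)
  rwa [one_div, ENNReal.rpow_inv_le_iff hk', ENNReal.mul_rpow_of_nonneg _ _ hk'.le,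
    ← ENNReal.rpow_mul, inv_mul_cancel₀ hk'.ne', ENNReal.rpow_one, ENNReal.rpow_natCast] at this

section Chaining

variable {f : ℝ → ℝ}

lemma edist_le_maxDyadicIncrement {n i j : ℕ} (hij : i ≤ j) (hji : j ≤ i + 1) (hj : j ≤ 2 ^ n) :
    edist (f (j / 2 ^ n)) (f (i / 2 ^ n)) ≤ maxDyadicIncrement f n := by
  obtain rfl | rfl : j = i ∨ j = i + 1 := by omega
  · simp
  · exact le_iSup_of_le (⟨i, hj⟩ : Fin (2 ^ n)) (by push_cast; rfl)

lemma edist_dyadicFloor_succ_le {x : ℝ} (hx0 : 0 ≤ x) (hx1 : x ≤ 1) (n : ℕ) :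
    edist (f (⌊x * 2 ^ n⌋₊ / 2 ^ n)) (f (⌊x * 2 ^ (n + 1)⌋₊ / 2 ^ (n + 1))) ≤
      maxDyadicIncrement f (n + 1) := by
  set a := ⌊x * 2 ^ n⌋₊
  have hlow : 2 * a ≤ ⌊x * 2 ^ (n + 1)⌋₊ := Nat.le_floor <| by
    push_cast
    rw [pow_succ]
    nlinarith [Nat.floor_le (by positivity : 0 ≤ x * 2 ^ n)]
  have hupp : ⌊x * 2 ^ (n + 1)⌋₊ ≤ 2 * a + 1 := by
    refine Nat.le_of_lt_succ ((Nat.floor_lt (by positivity)).2 ?_)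
    push_cast
    rw [pow_succ]
    nlinarith [Nat.lt_floor_add_one (x * 2 ^ n)]
  have htop : ⌊x * 2 ^ (n + 1)⌋₊ ≤ 2 ^ (n + 1) := Nat.floor_le_of_le <| by
    push_cast
    nlinarith [pow_pos (two_pos (α := ℝ)) (n + 1)]
  have ha : (a : ℝ) / 2 ^ n = ((2 * a : ℕ) : ℝ) / 2 ^ (n + 1) := by
    push_cast
    rw [pow_succ]
    field_simp
  rw [ha, edist_comm]
  exact edist_le_maxDyadicIncrement hlow hupp htop

lemma tendsto_dyadicFloor {x : ℝ} (hx : 0 ≤ x) :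
    Tendsto (fun n : ℕ => (⌊x * 2 ^ n⌋₊ : ℝ) / 2 ^ n) atTop (𝓝 x) :=
  (tendsto_nat_floor_mul_div_atTop hx).comp (tendsto_pow_atTop_atTop_of_one_lt one_lt_two)

lemma edist_dyadicFloor_le_tsum (hf : Continuous f) {x : ℝ} (hx0 : 0 ≤ x) (hx1 : x ≤ 1) (m : ℕ) :
    edist (f (⌊x * 2 ^ m⌋₊ / 2 ^ m)) (f x) ≤ ∑' i, maxDyadicIncrement f (m + i + 1) :=
  edist_le_tsum_of_edist_le_of_tendsto (fun n => maxDyadicIncrement f (n + 1))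
    (edist_dyadicFloor_succ_le hx0 hx1) ((hf.tendsto x).comp (tendsto_dyadicFloor hx0)) m

lemma edist_le_two_mul_tsum_maxDyadicIncrement (hf : Continuous f) {s t : ℝ} (hs : 0 ≤ s)
    (hst : s ≤ t) (ht : t ≤ 1) {m : ℕ} (hm : (t - s) * 2 ^ m ≤ 1) :
    edist (f t) (f s) ≤ 2 * ∑' i, maxDyadicIncrement f (m + i) := by
  set a := ⌊s * 2 ^ m⌋₊
  set b := ⌊t * 2 ^ m⌋₊
  have hab : a ≤ b := Nat.floor_le_floor (by gcongr)
  have hba : b ≤ a + 1 := by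
    rw [← Nat.floor_add_one (by positivity)]
    exact Nat.floor_le_floor (by linarith)
  have hb : b ≤ 2 ^ m := Nat.floor_le_of_le (by push_cast; nlinarith [pow_pos (two_pos (α := ℝ)) m])
  set T := ∑' i, maxDyadicIncrement f (m + i + 1)
  calc edist (f t) (f s)
      ≤ edist (f t) (f (b / 2 ^ m)) + edist (f (b / 2 ^ m)) (f (a / 2 ^ m)) +
          edist (f (a / 2 ^ m)) (f s) := edist_triangle4 _ _ _ _
    _ ≤ T + maxDyadicIncrement f m + T := by
        gcongr
        · rw [edist_comm]
          exact edist_dyadicFloor_le_tsum hf (by linarith) ht m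
        · exact edist_le_maxDyadicIncrement hab hba hb
        · exact edist_dyadicFloor_le_tsum hf hs (by linarith) m
    _ ≤ 2 * (maxDyadicIncrement f m + T) := by
        rw [two_mul, add_comm T]
        exact add_le_add_right le_add_self _
    _ = 2 * ∑' i, maxDyadicIncrement f (m + i) := by
        rw [tsum_eq_zero_add' ENNReal.summable]
        rfl

lemma ofReal_abs_sub_div_rpow_le_tsum (hf : Continuous f) {γ : ℝ} (hγ : 0 ≤ γ) {s t : ℝ}
    (hs : 0 ≤ s) (hst : s < t) (ht : t ≤ 1) :
    ENNReal.ofReal (|f t - f s| / (t - s) ^ γ) ≤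
      2 ^ (1 + γ) * ∑' n, (2 ^ γ) ^ n * maxDyadicIncrement f n := by
  have hts : 0 < t - s := sub_pos.2 hst
  obtain ⟨m, hm, hm'⟩ := exists_nat_pow_near (one_le_inv_iff₀.2 ⟨hts, by linarith⟩) one_lt_two
  have hdiv : |f t - f s| / (t - s) ^ γ ≤ ((2 : ℝ) ^ (m + 1)) ^ γ * |f t - f s| := by
    rw [div_le_iff₀ (by positivity), mul_comm _ |_|, mul_assoc,
      ← Real.mul_rpow (by positivity) hts.le]
    refine le_mul_of_one_le_right (abs_nonneg _) (Real.one_le_rpow ?_ hγ)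
    rw [← inv_mul_cancel₀ hts.ne']
    exact mul_le_mul_of_nonneg_right hm'.le hts.le
  have hweight : ENNReal.ofReal (((2 : ℝ) ^ (m + 1)) ^ γ) = 2 ^ γ * (2 ^ γ) ^ m := by
    rw [← ENNReal.ofReal_rpow_of_pos (by positivity), ENNReal.ofReal_pow zero_le_two,
      ENNReal.ofReal_ofNat, ← ENNReal.rpow_natCast_mul, mul_comm, ENNReal.rpow_mul_natCast,
      pow_succ']
  have hw : (1 : ℝ≥0∞) ≤ 2 ^ γ := by
    simpa using ENNReal.rpow_le_rpow_of_exponent_le one_le_two hγ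
  calc ENNReal.ofReal (|f t - f s| / (t - s) ^ γ)
      ≤ ENNReal.ofReal (((2 : ℝ) ^ (m + 1)) ^ γ) * edist (f t) (f s) := by
        rw [edist_dist, Real.dist_eq, ← ENNReal.ofReal_mul (by positivity)]
        exact ENNReal.ofReal_le_ofReal hdiv
    _ ≤ 2 ^ γ * (2 ^ γ) ^ m * (2 * ∑' i, maxDyadicIncrement f (m + i)) := by
        rw [hweight]
        gcongr
        refine edist_le_two_mul_tsum_maxDyadicIncrement hf hs hst.le ht ?_
        rw [← mul_inv_cancel₀ hts.ne']
        exact mul_le_mul_of_nonneg_left hm hts.le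
    _ = 2 ^ (1 + γ) * ∑' i, (2 ^ γ) ^ m * maxDyadicIncrement f (m + i) := by
        rw [ENNReal.rpow_add _ _ two_ne_zero ENNReal.ofNat_ne_top, ENNReal.rpow_one,
          ENNReal.tsum_mul_left]
        ring
    _ ≤ 2 ^ (1 + γ) * ∑' i, (2 ^ γ) ^ (m + i) * maxDyadicIncrement f (m + i) := by
        gcongr with i
        exact Nat.le_add_right m i
    _ ≤ 2 ^ (1 + γ) * ∑' n, (2 ^ γ) ^ n * maxDyadicIncrement f n :=
        mul_le_mul_right (ENNReal.tsum_comp_le_tsum_of_injective (add_right_injective m)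
          (fun n => (2 ^ γ) ^ n * maxDyadicIncrement f n)) _

theorem holderSeminorm_le_tsum (hf : Continuous f) {γ : ℝ} (hγ : 0 ≤ γ) :
    holderSeminorm γ f ≤ 2 ^ (1 + γ) * ∑' n, (2 ^ γ) ^ n * maxDyadicIncrement f n := by
  refine iSup_le fun ⟨⟨s, t⟩, hs, ht, hne⟩ => ?_
  rcases hne.lt_or_gt with h | h
  · rw [abs_of_pos (sub_pos.2 h)]
    exact ofReal_abs_sub_div_rpow_le_tsum hf hγ hs.1 h ht.2
  · rw [abs_sub_comm (f t), abs_sub_comm t, abs_of_pos (sub_pos.2 h)]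
    exact ofReal_abs_sub_div_rpow_le_tsum hf hγ ht.1 h hs.2

end Chaining

namespace IsStandardBrownianMotion

variable {Ω : Type*} [MeasurableSpace Ω] {P : Measure Ω} {B : ℝ → Ω → ℝ}

lemma measurable_maxDyadicIncrement (hB : IsStandardBrownianMotion P B) (n : ℕ) :
    Measurable fun ω => maxDyadicIncrement (B · ω) n :=
  Measurable.iSup fun _ => (hB.meas _).edist (hB.meas _)

lemma lintegral_edist_pow_le (hB : IsStandardBrownianMotion P B) {s t : ℝ} (hs : 0 ≤ s)
    (hst : s ≤ t) (k : ℕ) :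
    ∫⁻ ω, edist (B t ω) (B s ω) ^ k ∂P ≤ ENNReal.ofReal (t - s) ^ ((k : ℝ) / 2) * (k - 1)‼ := by
  simp_rw [edist_eq_enorm_sub]
  rw [← lintegral_map (f := fun x : ℝ => ‖x‖ₑ ^ k) (g := fun ω => B t ω - B s ω) (by fun_prop)
    ((hB.meas t).sub (hB.meas s)), hB.gauss s t hs hst]
  exact lintegral_enorm_pow_gaussianReal_le _ k

lemma lintegral_maxDyadicIncrement_pow_le (hB : IsStandardBrownianMotion P B) (n k : ℕ) :
    ∫⁻ ω, maxDyadicIncrement (B · ω) n ^ k ∂P ≤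
      2 ^ n * (2 ^ n)⁻¹ ^ ((k : ℝ) / 2) * (k - 1)‼ := by
  calc ∫⁻ ω, maxDyadicIncrement (B · ω) n ^ k ∂P
      ≤ ∫⁻ ω, ∑ j : Fin (2 ^ n),
          edist (B (((j : ℕ) + 1 : ℝ) / 2 ^ n) ω) (B ((j : ℕ) / 2 ^ n) ω) ^ k ∂P := by
        refine lintegral_mono fun ω => ?_
        simp only [maxDyadicIncrement, ENNReal.iSup_pow]
        exact iSup_le fun j => by
          apply Finset.single_le_sum (fun _ _ => zero_le) (Finset.mem_univ j)
    _ = ∑ j : Fin (2 ^ n),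
          ∫⁻ ω, edist (B (((j : ℕ) + 1 : ℝ) / 2 ^ n) ω) (B ((j : ℕ) / 2 ^ n) ω) ^ k ∂P :=
        lintegral_finsetSum _ fun _ _ => ((hB.meas _).edist (hB.meas _)).pow_const k
    _ ≤ ∑ _j : Fin (2 ^ n), ((2 : ℝ≥0∞) ^ n)⁻¹ ^ ((k : ℝ) / 2) * (k - 1)‼ := by
        gcongr with j
        refine (hB.lintegral_edist_pow_le (by positivity) (by gcongr; linarith) k).trans_eq ?_
        rw [← sub_div, add_sub_cancel_left, one_div, ENNReal.ofReal_inv_of_pos (by positivity),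
          ENNReal.ofReal_pow zero_le_two, ENNReal.ofReal_ofNat]
    _ = 2 ^ n * (2 ^ n)⁻¹ ^ ((k : ℝ) / 2) * (k - 1)‼ := by
        simp [mul_assoc]

lemma lintegral_weighted_maxDyadicIncrement_pow_le (hB : IsStandardBrownianMotion P B)
    {γ δ : ℝ} {k : ℕ} (hk : k ≠ 0) (hδ : δ ≤ 1 / 2 - γ - 1 / k) (n : ℕ) :
    ∫⁻ ω, ((2 ^ γ) ^ n * maxDyadicIncrement (B · ω) n) ^ k ∂P ≤
      (((2 : ℝ≥0∞) ^ (-δ)) ^ n) ^ k * (k - 1)‼ := by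
  have hexp : (((2 : ℝ≥0∞) ^ γ) ^ n) ^ k * (2 ^ n * (2 ^ n)⁻¹ ^ ((k : ℝ) / 2)) ≤
      (((2 : ℝ≥0∞) ^ (-δ)) ^ n) ^ k := by
    simp only [← ENNReal.rpow_natCast, ← ENNReal.rpow_mul, ← ENNReal.rpow_neg,
      ← ENNReal.rpow_add _ _ two_ne_zero ENNReal.ofNat_ne_top]
    refine ENNReal.rpow_le_rpow_of_exponent_le one_le_two ?_
    have hk' : (0 : ℝ) < k := by positivity
    have := mul_le_mul_of_nonneg_left hδ (by positivity : (0 : ℝ) ≤ n * k)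
    field_simp at this ⊢
    nlinarith
  simp_rw [mul_pow]
  rw [lintegral_const_mul _ ((hB.measurable_maxDyadicIncrement n).pow_const k)]
  calc _ ≤ (((2 : ℝ≥0∞) ^ γ) ^ n) ^ k * (2 ^ n * (2 ^ n)⁻¹ ^ ((k : ℝ) / 2) * (k - 1)‼) := by
        gcongr
        exact hB.lintegral_maxDyadicIncrement_pow_le n k
    _ ≤ (((2 : ℝ≥0∞) ^ (-δ)) ^ n) ^ k * (k - 1)‼ := by
        rw [← mul_assoc]
        gcongr

theorem lintegral_holderSeminorm_pow_le (hB : IsStandardBrownianMotion P B) {γ δ : ℝ}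
    (hγ : 0 ≤ γ) {k : ℕ} (hk : k ≠ 0) (hδ : δ ≤ 1 / 2 - γ - 1 / k) :
    ∫⁻ ω, (holderSeminorm γ fun t => B t ω) ^ k ∂P ≤
      (2 ^ (1 + γ) * (1 - 2 ^ (-δ))⁻¹) ^ k * (k - 1)‼ := by
  set F : ℕ → Ω → ℝ≥0∞ := fun n ω => (2 ^ γ) ^ n * maxDyadicIncrement (B · ω) n
  calc ∫⁻ ω, (holderSeminorm γ fun t => B t ω) ^ k ∂P
      ≤ ∫⁻ ω, (2 ^ (1 + γ) * ∑' n, F n ω) ^ k ∂P :=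
        lintegral_mono fun ω => pow_le_pow_left' (holderSeminorm_le_tsum (hB.cont ω) hγ) k
    _ ≤ (2 ^ (1 + γ)) ^ k * ((∑' n, ((2 : ℝ≥0∞) ^ (-δ)) ^ n) ^ k * (k - 1)‼) := by
        simp_rw [mul_pow]
        rw [lintegral_const_mul' _ _ (by simp)]
        gcongr
        exact lintegral_tsum_pow_le_of_le
          (fun n => ((hB.measurable_maxDyadicIncrement n).const_mul _).aemeasurable)
          (hB.lintegral_weighted_maxDyadicIncrement_pow_le hk hδ)
    _ = (2 ^ (1 + γ) * (1 - 2 ^ (-δ))⁻¹) ^ k * (k - 1)‼ := by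
        rw [ENNReal.tsum_geometric, mul_pow, mul_assoc]

end IsStandardBrownianMotion

lemma exists_pos_le_sub_one_div {ε : ℝ} (hε : 0 < ε) :
    ∃ δ > 0, ∀ k : ℕ, 1 / (k : ℝ) < ε → δ ≤ ε - 1 / k := by
  set N := ⌊ε⁻¹⌋₊ + 1
  have hN : ε⁻¹ < N := by push_cast [N]; exact Nat.lt_floor_add_one _
  have hNpos : (0 : ℝ) < N := by positivity
  refine ⟨ε - 1 / N, sub_pos.2 ((div_lt_iff₀ hNpos).2 ?_), fun k hk => ?_⟩
  · rwa [inv_lt_iff_one_lt_mul₀ hε, mul_comm] at hN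
  rcases Nat.eq_zero_or_pos k with rfl | hk0
  · simp [hNpos.le]
  have hkN : N ≤ k := by
    refine Nat.succ_le_of_lt ((Nat.floor_lt (by positivity)).2 ?_)
    rwa [div_lt_iff₀ (by positivity), mul_comm, ← inv_lt_iff_one_lt_mul₀ hε] at hk
  have : 1 / (k : ℝ) ≤ 1 / N := one_div_le_one_div_of_le hNpos (by exact_mod_cast hkN)
  linarith

/-- **Moment bounds for the Hölder seminorm of Brownian motion.** For a standard
one-dimensional Brownian motion `B` on `[0,1]` and every `γ ∈ (0, 1/2)` there is a
constant `C > 0` (depending only on `γ`) such that for every integer `k` with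
`γ < 1/2 - 1/k`,
`E[(sup_{s≠t∈[0,1]} |B t - B s|/|t-s|^γ)^k] ≤ 2 (2^{1+γ} C)^k (k-1)!!`. -/
theorem brownian_holder_seminorm_moment_bound {Ω : Type*} [MeasurableSpace Ω]
    (P : Measure Ω) (B : ℝ → Ω → ℝ) (hB : IsStandardBrownianMotion P B)
    (γ : ℝ) (hγ : 0 < γ) (hγ' : γ < 1 / 2) :
    ∃ C : ℝ, 0 < C ∧ ∀ k : ℕ, γ < 1 / 2 - 1 / (k : ℝ) →
      ∫⁻ ω, (holderSeminorm γ fun t => B t ω) ^ k ∂P ≤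
        ENNReal.ofReal (2 * (2 ^ (1 + γ) * C) ^ k * ((k - 1)‼ : ℝ)) := by
  have := hB.isProb
  obtain ⟨δ, hδ, hδk⟩ := exists_pos_le_sub_one_div (sub_pos.2 hγ')
  set r : ℝ≥0∞ := 2 ^ (-δ)
  have hr : r < 1 := ENNReal.rpow_lt_one_of_one_lt_of_neg ENNReal.one_lt_two (by linarith)
  have hC : (1 - r)⁻¹ ≠ ∞ := ENNReal.inv_ne_top.2 (tsub_pos_of_lt hr).ne'
  refine ⟨((1 - r)⁻¹).toReal, ENNReal.toReal_pos (by simp) hC, fun k hk => ?_⟩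
  rcases eq_or_ne k 0 with rfl | hk0
  · simp
  calc ∫⁻ ω, (holderSeminorm γ fun t => B t ω) ^ k ∂P
      ≤ (2 ^ (1 + γ) * (1 - r)⁻¹) ^ k * (k - 1)‼ :=
        hB.lintegral_holderSeminorm_pow_le hγ.le hk0 (hδk k (by linarith))
    _ ≤ 2 * (2 ^ (1 + γ) * (1 - r)⁻¹) ^ k * (k - 1)‼ := by
        gcongr
        exact le_mul_of_one_le_left' one_le_two
    _ = ENNReal.ofReal (2 * (2 ^ (1 + γ) * ((1 - r)⁻¹).toReal) ^ k * ((k - 1)‼ : ℝ)) := by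
        rw [ENNReal.ofReal_mul (by positivity), ENNReal.ofReal_mul zero_le_two,
          ENNReal.ofReal_pow (by positivity), ENNReal.ofReal_mul (by positivity),
          ← ENNReal.ofReal_rpow_of_pos two_pos, ENNReal.ofReal_toReal hC]
        simp
end
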